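/- arXiv:2206.07912 — 3 statements merged into one kernel-verified Lean document; each statement's English description precedes it below -/
import Mathlib

section
/- Strong duality for double-sampling certification: let P and Q be probability distributions on ℝ^d with densities p, q, and fix δ ∈ ℝ^d, P_A, Q_A ∈ [0,1]. Define the primal value C as the infimum over measurable f: ℝ^d → [0,1] of E_{ε~P}[f(ε+δ)] subject to E_{ε~P}[f(ε)] = P_A and E_{ε~Q}[f(ε)] = Q_A. Define the dual value D as the supremum over (λ₁,λ₂) ∈ ℝ² of Pr_{ε~P}[p(ε) < λ₁p(ε+δ) + λ₂q(ε+δ)] subject to Pr_{ε~P}[p(ε-δ) < λ₁p(ε)+λ₂q(ε)] = P_A and Pr_{ε~Q}[p(ε-δ) < λ₁p(ε)+λ₂q(ε)] = Q_A. If both problems are feasible, then C = D. -/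
open MeasureTheory

/-- The measure on `ℝ^d` with density `p` with respect to Lebesgue measure. -/
noncomputable def densMeasure (d : ℕ) (p : (Fin d → ℝ) → ℝ) : Measure (Fin d → ℝ) :=
  volume.withDensity fun x => ENNReal.ofReal (p x)

/-- Primal feasible set: measurable `f : ℝ^d → [0,1]` with
`E_{ε~P}[f(ε)] = PA` and `E_{ε~Q}[f(ε)] = QA`. -/
def primalFeasible (d : ℕ) (p q : (Fin d → ℝ) → ℝ) (PA QA : ℝ) :
    Set ((Fin d → ℝ) → ℝ) :=
  {f | Measurable f ∧ (∀ x, f x ∈ Set.Icc (0 : ℝ) 1) ∧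
    (∫ x, f x ∂(densMeasure d p)) = PA ∧ (∫ x, f x ∂(densMeasure d q)) = QA}

/-- Primal value: infimum of `E_{ε~P}[f(ε+δ)]` over the primal feasible set. -/
noncomputable def primalVal (d : ℕ) (p q : (Fin d → ℝ) → ℝ) (δ : Fin d → ℝ)
    (PA QA : ℝ) : ℝ :=
  sInf ((fun f => ∫ x, f (x + δ) ∂(densMeasure d p)) '' primalFeasible d p q PA QA)

/-- Dual feasible set: pairs `(λ₁, λ₂)` with
`Pr_{ε~P}[p(ε-δ) < λ₁p(ε)+λ₂q(ε)] = PA` and `Pr_{ε~Q}[p(ε-δ) < λ₁p(ε)+λ₂q(ε)] = QA`. -/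
def dualFeasible (d : ℕ) (p q : (Fin d → ℝ) → ℝ) (δ : Fin d → ℝ)
    (PA QA : ℝ) : Set (ℝ × ℝ) :=
  {l | (densMeasure d p {x | p (x - δ) < l.1 * p x + l.2 * q x}).toReal = PA ∧
       (densMeasure d q {x | p (x - δ) < l.1 * p x + l.2 * q x}).toReal = QA}

/-- Dual value: supremum of `Pr_{ε~P}[p(ε) < λ₁p(ε+δ) + λ₂q(ε+δ)]` over the dual
feasible set. -/
noncomputable def dualVal (d : ℕ) (p q : (Fin d → ℝ) → ℝ) (δ : Fin d → ℝ)
    (PA QA : ℝ) : ℝ :=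
  sSup ((fun l : ℝ × ℝ =>
      (densMeasure d p {x | p x < l.1 * p (x + δ) + l.2 * q (x + δ)}).toReal) ''
    dualFeasible d p q δ PA QA)

lemma int_dens (d : ℕ) (p : (Fin d → ℝ) → ℝ) (hp : Measurable p) (hp0 : ∀ x, 0 ≤ p x)
    (g : (Fin d → ℝ) → ℝ) :
    ∫ x, g x ∂(densMeasure d p) = ∫ x, g x * p x := by
  have : densMeasure d p = volume.withDensity (fun x => ((p x).toNNReal : ENNReal)) := rfl
  rw [this, integral_withDensity_eq_integral_smul hp.real_toNNReal]
  congr 1; funext x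
  simp [NNReal.smul_def, Real.coe_toNNReal _ (hp0 x), mul_comm]

lemma int_p (d : ℕ) (p : (Fin d → ℝ) → ℝ) (hp : Measurable p) (hp0 : ∀ x, 0 ≤ p x)
    (hpP : IsProbabilityMeasure (densMeasure d p)) : Integrable p (volume : Measure (Fin d → ℝ)) := by
  refine ⟨hp.aestronglyMeasurable, ?_⟩
  have h1 : (densMeasure d p) Set.univ = 1 := measure_univ
  rw [densMeasure, withDensity_apply _ MeasurableSet.univ, setLIntegral_univ] at h1
  rw [HasFiniteIntegral]
  have : ∀ x, (‖p x‖ₑ : ENNReal) = ENNReal.ofReal (p x) := by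
    intro x
    rw [← ofReal_norm, Real.norm_of_nonneg (hp0 x)]
  simp only [this, h1]
  exact ENNReal.one_lt_top

lemma int_mul_bdd {d : ℕ} {h w : (Fin d → ℝ) → ℝ} (hh : Measurable h) (hb : ∀ x, |h x| ≤ 1)
    (hw : Integrable w (volume : Measure (Fin d → ℝ))) :
    Integrable (fun x => h x * w x) (volume : Measure (Fin d → ℝ)) := by
  refine hw.mono (hh.aestronglyMeasurable.mul hw.aestronglyMeasurable) ?_
  filter_upwards with x
  rw [Real.norm_eq_abs, Real.norm_eq_abs, abs_mul]
  exact mul_le_of_le_one_left (abs_nonneg _) (hb x)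

lemma translate_int {d : ℕ} (p : (Fin d → ℝ) → ℝ) (δ : Fin d → ℝ) (h : (Fin d → ℝ) → ℝ) :
    ∫ x, h (x + δ) * p x = ∫ x, h x * p (x - δ) := by
  have := integral_add_right_eq_self (μ := (volume : Measure (Fin d → ℝ)))
    (fun x => h x * p (x - δ)) δ
  simpa [add_sub_cancel_right] using this

section core
variable {d : ℕ} {p q : (Fin d → ℝ) → ℝ} {δ : Fin d → ℝ} {PA QA : ℝ}
lemma hT_meas (hp : Measurable p) (hq : Measurable q) (l : ℝ × ℝ) :
    MeasurableSet {x | p (x - δ) < l.1 * p x + l.2 * q x} :=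
  measurableSet_lt (hp.comp (measurable_sub_const δ))
    ((measurable_const.mul hp).add (measurable_const.mul hq))

lemma hS_meas (hp : Measurable p) (hq : Measurable q) (l : ℝ × ℝ) :
    MeasurableSet {x : Fin d → ℝ | p x < l.1 * p (x + δ) + l.2 * q (x + δ)} :=
  measurableSet_lt hp (((measurable_const.mul (hp.comp (measurable_add_const δ)))).add
    (measurable_const.mul (hq.comp (measurable_add_const δ))))

/-- The indicator of the dual set is primal feasible, with primal objective equal to
the dual objective. -/
lemma dual_indicator (hp : Measurable p) (hq : Measurable q) (l : ℝ × ℝ) (hl : l ∈ dualFeasible d p q δ PA QA) :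
    ({x | p (x - δ) < l.1 * p x + l.2 * q x}.indicator (fun _ => (1:ℝ))
        ∈ primalFeasible d p q PA QA) ∧
    (∫ x, {x | p (x - δ) < l.1 * p x + l.2 * q x}.indicator (fun _ => (1:ℝ)) (x + δ)
        ∂(densMeasure d p))
      = (densMeasure d p {x | p x < l.1 * p (x + δ) + l.2 * q (x + δ)}).toReal := by
  set T := {x | p (x - δ) < l.1 * p x + l.2 * q x} with hTdef
  have hT : MeasurableSet T := hT_meas hp hq l
  have hS : MeasurableSet {x : Fin d → ℝ | p x < l.1 * p (x + δ) + l.2 * q (x + δ)} :=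
    hS_meas hp hq l
  constructor
  · refine ⟨measurable_const.indicator hT, ?_, ?_, ?_⟩
    · intro x
      by_cases hx : x ∈ T <;> simp [hx]
    · rw [show T.indicator (fun _ => (1:ℝ)) = T.indicator 1 from rfl,
        integral_indicator_one hT]
      exact hl.1
    · rw [show T.indicator (fun _ => (1:ℝ)) = T.indicator 1 from rfl,
        integral_indicator_one hT]
      exact hl.2
  · have heq : (fun x => T.indicator (fun _ => (1:ℝ)) (x + δ))
        = {x : Fin d → ℝ | p x < l.1 * p (x + δ) + l.2 * q (x + δ)}.indicator 1 := by
      funext x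
      by_cases hx : p x < l.1 * p (x + δ) + l.2 * q (x + δ)
      · have : x + δ ∈ T := by simpa [hTdef, add_sub_cancel_right] using hx
        simp [Set.indicator_of_mem, this, hx]
      · have : x + δ ∉ T := by simpa [hTdef, add_sub_cancel_right] using hx
        simp [Set.indicator_of_notMem, this, hx]
    rw [heq, integral_indicator_one hS, measureReal_def]
end core

section weak
variable {d : ℕ} {p q : (Fin d → ℝ) → ℝ} {δ : Fin d → ℝ} {PA QA : ℝ}

lemma weak_duality (hp : Measurable p) (hq : Measurable q)
    (hp0 : ∀ x, 0 ≤ p x) (hq0 : ∀ x, 0 ≤ q x)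
    (hpP : IsProbabilityMeasure (densMeasure d p))
    (hqP : IsProbabilityMeasure (densMeasure d q))
    {f : (Fin d → ℝ) → ℝ} (hf : f ∈ primalFeasible d p q PA QA)
    {l : ℝ × ℝ} (hl : l ∈ dualFeasible d p q δ PA QA) :
    (densMeasure d p {x | p x < l.1 * p (x + δ) + l.2 * q (x + δ)}).toReal
      ≤ ∫ x, f (x + δ) ∂(densMeasure d p) := by
  obtain ⟨hfm, hf01, hfP, hfQ⟩ := hf
  set T := {x | p (x - δ) < l.1 * p x + l.2 * q x} with hTdef
  set g := T.indicator (fun _ => (1:ℝ)) with hgdef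
  obtain ⟨⟨hgm, hg01, hgP, hgQ⟩, hgobj⟩ := dual_indicator hp hq l hl
  rw [← hgobj]
  -- rewrite everything as Lebesgue integrals
  rw [int_dens d p hp hp0, int_dens d p hp hp0]
  rw [translate_int p δ f, translate_int p δ g]
  -- integrability facts
  have hIp : Integrable p (volume : Measure (Fin d → ℝ)) := int_p d p hp hp0 hpP
  have hIq : Integrable q (volume : Measure (Fin d → ℝ)) := int_p d q hq hq0 hqP
  have hIps : Integrable (fun x => p (x - δ)) (volume : Measure (Fin d → ℝ)) :=
    hIp.comp_sub_right δ
  have hφm : Measurable (fun x => f x - g x) := hfm.sub hgm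
  have hφb : ∀ x, |f x - g x| ≤ 1 := by
    intro x
    rw [abs_le]
    obtain ⟨h1, h2⟩ := hf01 x
    obtain ⟨h3, h4⟩ := hg01 x
    constructor <;> linarith
  have hIφps := int_mul_bdd hφm hφb hIps
  have hIφp := int_mul_bdd hφm hφb hIp
  have hIφq := int_mul_bdd hφm hφb hIq
  have hIφcomb : Integrable (fun x => (f x - g x) * (l.1 * p x + l.2 * q x))
      (volume : Measure (Fin d → ℝ)) := by
    have : (fun x => (f x - g x) * (l.1 * p x + l.2 * q x))
        = fun x => l.1 * ((f x - g x) * p x) + l.2 * ((f x - g x) * q x) := by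
      funext x; ring
    rw [this]
    exact (hIφp.const_mul l.1).add (hIφq.const_mul l.2)
  have hfb : ∀ x, |f x| ≤ 1 := fun x => abs_le.mpr ⟨by linarith [(hf01 x).1], (hf01 x).2⟩
  have hgb : ∀ x, |g x| ≤ 1 := fun x => abs_le.mpr ⟨by linarith [(hg01 x).1], (hg01 x).2⟩
  have hIfps := int_mul_bdd hfm hfb hIps
  have hIgps := int_mul_bdd hgm hgb hIps
  have hIfp := int_mul_bdd hfm hfb hIp
  have hIgp := int_mul_bdd hgm hgb hIp
  have hIfq := int_mul_bdd hfm hfb hIq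
  have hIgq := int_mul_bdd hgm hgb hIq
  -- pointwise nonnegativity
  have key1 : 0 ≤ ∫ x, (f x - g x) * (p (x - δ) - (l.1 * p x + l.2 * q x)) := by
    apply integral_nonneg
    intro x
    show 0 ≤ (f x - g x) * (p (x - δ) - (l.1 * p x + l.2 * q x))
    by_cases hx : x ∈ T
    · have hg1 : g x = 1 := Set.indicator_of_mem hx _
      have hlt : p (x - δ) < l.1 * p x + l.2 * q x := hx
      have : f x - g x ≤ 0 := by rw [hg1]; linarith [(hf01 x).2]
      nlinarith
    · have hg0 : g x = 0 := Set.indicator_of_notMem hx _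
      have hge : l.1 * p x + l.2 * q x ≤ p (x - δ) := not_lt.mp hx
      have h2 : 0 ≤ f x - g x := by rw [hg0]; linarith [(hf01 x).1]
      exact mul_nonneg h2 (by linarith)
  -- the comb integral vanishes
  have hfPv : ∫ x, f x * p x = PA := by rw [← int_dens d p hp hp0]; exact hfP
  have hgPv : ∫ x, g x * p x = PA := by rw [← int_dens d p hp hp0]; exact hgP
  have hfQv : ∫ x, f x * q x = QA := by rw [← int_dens d q hq hq0]; exact hfQ
  have hgQv : ∫ x, g x * q x = QA := by rw [← int_dens d q hq hq0]; exact hgQ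
  have hφpv : ∫ x, (f x - g x) * p x = 0 := by
    have : (fun x => (f x - g x) * p x) = fun x => f x * p x - g x * p x := by
      funext x; ring
    rw [this, integral_sub hIfp hIgp, hfPv, hgPv, sub_self]
  have hφqv : ∫ x, (f x - g x) * q x = 0 := by
    have : (fun x => (f x - g x) * q x) = fun x => f x * q x - g x * q x := by
      funext x; ring
    rw [this, integral_sub hIfq hIgq, hfQv, hgQv, sub_self]
  have key3 : ∫ x, (f x - g x) * (l.1 * p x + l.2 * q x) = 0 := by
    have : (fun x => (f x - g x) * (l.1 * p x + l.2 * q x))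
        = fun x => l.1 * ((f x - g x) * p x) + l.2 * ((f x - g x) * q x) := by
      funext x; ring
    rw [this, integral_add ((hIφp.const_mul l.1)) ((hIφq.const_mul l.2)),
      integral_const_mul, integral_const_mul, hφpv, hφqv]
    ring
  have key2 : ∫ x, (f x - g x) * (p (x - δ) - (l.1 * p x + l.2 * q x))
      = (∫ x, (f x - g x) * p (x - δ)) - ∫ x, (f x - g x) * (l.1 * p x + l.2 * q x) := by
    have : (fun x => (f x - g x) * (p (x - δ) - (l.1 * p x + l.2 * q x)))
        = fun x => (f x - g x) * p (x - δ) - (f x - g x) * (l.1 * p x + l.2 * q x) := by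
      funext x; ring
    rw [this, integral_sub hIφps hIφcomb]
  have key4 : 0 ≤ ∫ x, (f x - g x) * p (x - δ) := by
    rw [key2, key3, sub_zero] at key1
    exact key1
  have key5 : ∫ x, (f x - g x) * p (x - δ)
      = (∫ x, f x * p (x - δ)) - ∫ x, g x * p (x - δ) := by
    have : (fun x => (f x - g x) * p (x - δ))
        = fun x => f x * p (x - δ) - g x * p (x - δ) := by
      funext x; ring
    rw [this, integral_sub hIfps hIgps]
  rw [key5] at key4
  linarith
end weak


/-- Strong duality for double-sampling certification: if both the primal and the dual
problems are feasible, their optimal values coincide. -/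
theorem strong_duality (d : ℕ) (p q : (Fin d → ℝ) → ℝ)
    (hp : Measurable p) (hq : Measurable q)
    (hp0 : ∀ x, 0 ≤ p x) (hq0 : ∀ x, 0 ≤ q x)
    (hpP : IsProbabilityMeasure (densMeasure d p))
    (hqP : IsProbabilityMeasure (densMeasure d q))
    (δ : Fin d → ℝ) (PA QA : ℝ)
    (hPA : PA ∈ Set.Icc (0 : ℝ) 1) (hQA : QA ∈ Set.Icc (0 : ℝ) 1)
    (hprimal : (primalFeasible d p q PA QA).Nonempty)
    (hdual : (dualFeasible d p q δ PA QA).Nonempty) :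
    primalVal d p q δ PA QA = dualVal d p q δ PA QA := by
  set P := (fun f => ∫ x, f (x + δ) ∂(densMeasure d p)) '' primalFeasible d p q PA QA with hP
  set D := ((fun l : ℝ × ℝ =>
      (densMeasure d p {x | p x < l.1 * p (x + δ) + l.2 * q (x + δ)}).toReal) ''
    dualFeasible d p q δ PA QA) with hD
  have hPne : P.Nonempty := hprimal.image _
  have hDne : D.Nonempty := hdual.image _
  have hweak : ∀ a ∈ P, ∀ b ∈ D, b ≤ a := by
    rintro a ⟨f, hf, rfl⟩ b ⟨l, hl, rfl⟩
    exact weak_duality hp hq hp0 hq0 hpP hqP hf hl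
  have hsub : D ⊆ P := by
    rintro b ⟨l, hl, rfl⟩
    obtain ⟨hgf, hgobj⟩ := dual_indicator hp hq l hl
    exact ⟨_, hgf, hgobj⟩
  obtain ⟨a0, ha0⟩ := hPne
  obtain ⟨b0, hb0⟩ := hDne
  have hbddP : BddBelow P := ⟨b0, fun a ha => hweak a ha b0 hb0⟩
  have hbddD : BddAbove D := ⟨a0, fun b hb => hweak a0 ha0 b hb⟩
  refine le_antisymm ?_ ?_
  · exact le_trans (csInf_le hbddP (hsub hb0)) (le_csSup hbddD hb0)
  · exact csSup_le ⟨b0, hb0⟩ fun b hb => le_csInf ⟨a0, ha0⟩ fun a ha => hweak a ha b hb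
end

section
/- Let g(r) = C₁r^{-2k}exp(-r²/(2σ'²)) and h(r) = C₂r^{-2k}exp(-r²/(2β'²)) with C₁, C₂ > 0, σ' ≠ β' positive, k ∈ ℕ. For any λ₁, λ₂ ∈ ℝ not both zero, the function r ↦ λ₁g(r) + λ₂h(r) on (0, ∞) has at most one critical point; consequently it is unimodal on (0, ∞). -/
open Real

lemma hasDerivAt_term (L s p r : ℝ) (hr : 0 < r) (hs : 0 < s) :
    HasDerivAt (fun x : ℝ => L * x ^ p * Real.exp (-x ^ 2 / (2 * s ^ 2)))
      (L * (r ^ (p - 1) * Real.exp (-r ^ 2 / (2 * s ^ 2)) * (p - r ^ 2 / s ^ 2))) r := by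
  have h1 : HasDerivAt (fun x : ℝ => x ^ p) (p * r ^ (p - 1)) r :=
    Real.hasDerivAt_rpow_const (Or.inl hr.ne')
  have h2 : HasDerivAt (fun x : ℝ => -x ^ 2 / (2 * s ^ 2)) (-(2 * r) / (2 * s ^ 2)) r := by
    have h := (hasDerivAt_pow 2 r).neg.div_const (2 * s ^ 2)
    simpa using h
  have h3 := h2.exp
  have h4 : HasDerivAt (fun x : ℝ => L * x ^ p * Real.exp (-x ^ 2 / (2 * s ^ 2))) _ r :=
    (h1.const_mul L).mul h3
  have hrp : r ^ p = r ^ (p - 1) * r := by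
    rw [← Real.rpow_add_one hr.ne' (p - 1)]; ring_nf
  convert h4 using 1
  rw [hrp]
  have hs2 : s ^ 2 ≠ 0 := pow_ne_zero 2 hs.ne'
  field_simp
  ring

lemma hasDerivAt_H (A B σ β c a b x : ℝ) (hxb : x + b ≠ 0) (hσ : σ ≠ 0) :
    HasDerivAt (fun x : ℝ => A * (β ^ 2 / σ ^ 2 * Real.exp (-c * x) * (x + a) / (x + b)) + B)
      (A * (β ^ 2 / σ ^ 2 * Real.exp (-c * x) * ((b - a - c * (x + a) * (x + b)) / (x + b) ^ 2)))
      x := by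
  have h1 : HasDerivAt (fun x : ℝ => -c * x) (-c) x := by
    simpa using (hasDerivAt_id x).const_mul (-c)
  have h2 := h1.exp
  have hnum : HasDerivAt (fun x : ℝ => β ^ 2 / σ ^ 2 * Real.exp (-c * x) * (x + a))
      ((β ^ 2 / σ ^ 2 * (Real.exp (-c * x) * (-c))) * (x + a)
        + β ^ 2 / σ ^ 2 * Real.exp (-c * x) * 1) x :=
    (h2.const_mul (β ^ 2 / σ ^ 2)).mul ((hasDerivAt_id x).add_const a)
  have hden : HasDerivAt (fun x : ℝ => x + b) 1 x := (hasDerivAt_id x).add_const b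
  have h5 := (hnum.div hden hxb).const_mul A
  have h6 : HasDerivAt (fun x : ℝ => A * (β ^ 2 / σ ^ 2 * Real.exp (-c * x) * (x + a) / (x + b)) + B) _ x :=
    h5.add_const B
  convert h6 using 1
  have h7 : (x + b) ^ 2 ≠ 0 := pow_ne_zero 2 hxb
  ring

set_option maxHeartbeats 1600000 in
theorem combination_unimodal_aux (k : ℕ) (A B σ β : ℝ)
    (hσ : 0 < σ) (hσβ : σ < β) (hAB : ¬(A = 0 ∧ B = 0)) :
    Set.Subsingleton {r : ℝ | 0 < r ∧
      deriv (fun r : ℝ =>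
        A * r ^ (-(2 : ℝ) * k) * Real.exp (-r ^ 2 / (2 * σ ^ 2)) +
        B * r ^ (-(2 : ℝ) * k) * Real.exp (-r ^ 2 / (2 * β ^ 2))) r = 0} ∧
    ∃ r₀ : ℝ,
      (MonotoneOn (fun r : ℝ =>
          A * r ^ (-(2 : ℝ) * k) * Real.exp (-r ^ 2 / (2 * σ ^ 2)) +
          B * r ^ (-(2 : ℝ) * k) * Real.exp (-r ^ 2 / (2 * β ^ 2)))
          (Set.Ioc 0 r₀) ∧
        AntitoneOn (fun r : ℝ =>
          A * r ^ (-(2 : ℝ) * k) * Real.exp (-r ^ 2 / (2 * σ ^ 2)) +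
          B * r ^ (-(2 : ℝ) * k) * Real.exp (-r ^ 2 / (2 * β ^ 2)))
          (Set.Ioi 0 ∩ Set.Ici r₀)) ∨
      (AntitoneOn (fun r : ℝ =>
          A * r ^ (-(2 : ℝ) * k) * Real.exp (-r ^ 2 / (2 * σ ^ 2)) +
          B * r ^ (-(2 : ℝ) * k) * Real.exp (-r ^ 2 / (2 * β ^ 2)))
          (Set.Ioc 0 r₀) ∧
        MonotoneOn (fun r : ℝ =>
          A * r ^ (-(2 : ℝ) * k) * Real.exp (-r ^ 2 / (2 * σ ^ 2)) +
          B * r ^ (-(2 : ℝ) * k) * Real.exp (-r ^ 2 / (2 * β ^ 2)))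
          (Set.Ioi 0 ∩ Set.Ici r₀)) := by
  have hβ : 0 < β := hσ.trans hσβ
  set f : ℝ → ℝ := fun r : ℝ =>
      A * r ^ (-(2 : ℝ) * k) * Real.exp (-r ^ 2 / (2 * σ ^ 2)) +
      B * r ^ (-(2 : ℝ) * k) * Real.exp (-r ^ 2 / (2 * β ^ 2)) with hf
  set c : ℝ := 1 / (2 * σ ^ 2) - 1 / (2 * β ^ 2) with hcdef
  set a : ℝ := 2 * k * σ ^ 2 with hadef
  set b : ℝ := 2 * k * β ^ 2 with hbdef
  set H : ℝ → ℝ := fun x : ℝ =>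
      A * (β ^ 2 / σ ^ 2 * Real.exp (-c * x) * (x + a) / (x + b)) + B with hHdef
  set M : ℝ → ℝ := fun r : ℝ =>
      r ^ ((-(2 : ℝ) * k) - 1) * Real.exp (-r ^ 2 / (2 * β ^ 2)) * ((r ^ 2 + b) / β ^ 2)
      with hMdef
  have hc : 0 < c := by
    have h1 : (0:ℝ) < 2 * σ ^ 2 := by positivity
    have h2 : 2 * σ ^ 2 < 2 * β ^ 2 := by nlinarith
    exact sub_pos.mpr (one_div_lt_one_div_of_lt h1 h2)
  have ha : 0 ≤ a := by positivity
  have hb : 0 ≤ b := by positivity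
  -- derivative of f
  have hder : ∀ r : ℝ, 0 < r → HasDerivAt f (-(M r) * H (r ^ 2)) r := by
    intro r hr
    have h1 := hasDerivAt_term A σ (-(2 : ℝ) * k) r hr hσ
    have h2 := hasDerivAt_term B β (-(2 : ℝ) * k) r hr hβ
    have h3 : HasDerivAt f _ r := h1.add h2
    convert h3 using 1
    have hxb : (0:ℝ) < r ^ 2 + b := by positivity
    have hexp : Real.exp (-r ^ 2 / (2 * β ^ 2)) * Real.exp (-c * r ^ 2)
        = Real.exp (-r ^ 2 / (2 * σ ^ 2)) := by
      rw [← Real.exp_add]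
      congr 1
      rw [hcdef]
      field_simp
      ring
    simp only [hMdef, hHdef]
    rw [← hexp]
    have hσ2 : σ ^ 2 ≠ 0 := by positivity
    have hβ2 : β ^ 2 ≠ 0 := by positivity
    field_simp
    ring
  have hMpos : ∀ r : ℝ, 0 < r → 0 < M r := by
    intro r hr
    have h1 : 0 < r ^ ((-(2 : ℝ) * k) - 1) := Real.rpow_pos_of_pos hr _
    have h2 : 0 < r ^ 2 + b := by positivity
    positivity
  have hderiv : ∀ r : ℝ, 0 < r → deriv f r = -(M r) * H (r ^ 2) := fun r hr =>
    (hder r hr).deriv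
  have hdiff : ∀ r : ℝ, 0 < r → DifferentiableAt ℝ f r := fun r hr =>
    (hder r hr).differentiableAt
  have hcont : ∀ S : Set ℝ, S ⊆ Set.Ioi 0 → ContinuousOn f S := fun S hS r hr =>
    ((hdiff r (hS hr)).continuousAt).continuousWithinAt
  -- key inequality
  have hkey : ∀ x : ℝ, 0 < x → b - a - c * (x + a) * (x + b) < 0 := by
    intro x hx
    have hk2 : (k:ℝ) ≤ (k:ℝ) ^ 2 := by
      have : k ≤ k ^ 2 := Nat.le_self_pow (by norm_num) k
      exact_mod_cast this
    have hc2 : c * (2 * σ ^ 2 * β ^ 2) = β ^ 2 - σ ^ 2 := by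
      rw [hcdef]; field_simp
    rw [hadef, hbdef]
    have hσβ2 : σ ^ 2 < β ^ 2 := by nlinarith
    nlinarith [mul_pos hx hx, mul_pos (mul_pos hx hx) hc,
      mul_nonneg (mul_nonneg (le_of_lt hc) (le_of_lt hx)) (by positivity : (0:ℝ) ≤ (k:ℝ)),
      mul_pos hc hx, sq_nonneg ((k:ℝ)), (by positivity : (0:ℝ) ≤ (k:ℝ)),
      mul_nonneg (by positivity : (0:ℝ) ≤ (k:ℝ)) (by linarith : (0:ℝ) ≤ β^2 - σ^2)]
  -- derivative of H
  have hHder : ∀ x : ℝ, 0 < x → HasDerivAt H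
      (A * (β ^ 2 / σ ^ 2 * Real.exp (-c * x) * ((b - a - c * (x + a) * (x + b)) / (x + b) ^ 2)))
      x := by
    intro x hx
    have hxb : x + b ≠ 0 := by positivity
    exact hasDerivAt_H A B σ β c a b x hxb hσ.ne'
  have hHcont : ContinuousOn H (Set.Ioi 0) := fun x hx =>
    ((hHder x hx).differentiableAt.continuousAt).continuousWithinAt
  have hHzero : ∀ r : ℝ, 0 < r → deriv f r = 0 → H (r ^ 2) = 0 := by
    intro r hr h0
    rw [hderiv r hr] at h0
    have hM : -(M r) ≠ 0 := neg_ne_zero.mpr (hMpos r hr).ne'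
    exact (mul_eq_zero.mp h0).resolve_left hM
  have hanti : 0 < A → StrictAntiOn H (Set.Ioi 0) := by
    intro hA
    refine strictAntiOn_of_deriv_neg (convex_Ioi 0) hHcont ?_
    intro x hx
    rw [interior_Ioi] at hx
    rw [(hHder x hx).deriv]
    have h1 : (b - a - c * (x + a) * (x + b)) / (x + b) ^ 2 < 0 :=
      div_neg_of_neg_of_pos (hkey x hx) (pow_pos (add_pos_of_pos_of_nonneg hx hb) 2)
    have h2 : 0 < β ^ 2 / σ ^ 2 * Real.exp (-c * x) := by positivity
    exact mul_neg_of_pos_of_neg hA (mul_neg_of_pos_of_neg h2 h1)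
  have hmono : A < 0 → StrictMonoOn H (Set.Ioi 0) := by
    intro hA
    refine strictMonoOn_of_deriv_pos (convex_Ioi 0) hHcont ?_
    intro x hx
    rw [interior_Ioi] at hx
    rw [(hHder x hx).deriv]
    have h1 : (b - a - c * (x + a) * (x + b)) / (x + b) ^ 2 < 0 :=
      div_neg_of_neg_of_pos (hkey x hx) (pow_pos (add_pos_of_pos_of_nonneg hx hb) 2)
    have h2 : 0 < β ^ 2 / σ ^ 2 * Real.exp (-c * x) := by positivity
    exact mul_pos_of_neg_of_neg hA (mul_neg_of_pos_of_neg h2 h1)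
  constructor
  · -- at most one critical point
    rintro r1 ⟨hr1p, hd1⟩ r2 ⟨hr2p, hd2⟩
    have h1 : H (r1 ^ 2) = 0 := hHzero r1 hr1p hd1
    have h2 : H (r2 ^ 2) = 0 := hHzero r2 hr2p hd2
    rcases eq_or_ne A 0 with hA0 | hA0
    · exfalso
      have hB : B ≠ 0 := fun hB => hAB ⟨hA0, hB⟩
      apply hB
      rw [hHdef] at h1
      simpa [hA0] using h1
    · have hmem1 : r1 ^ 2 ∈ Set.Ioi (0:ℝ) := Set.mem_Ioi.mpr (pow_pos hr1p 2)
      have hmem2 : r2 ^ 2 ∈ Set.Ioi (0:ℝ) := Set.mem_Ioi.mpr (pow_pos hr2p 2)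
      have heq : r1 ^ 2 = r2 ^ 2 := by
        rcases hA0.lt_or_gt with h | h
        · exact (hmono h).injOn hmem1 hmem2 (h1.trans h2.symm)
        · exact (hanti h).injOn hmem1 hmem2 (h1.trans h2.symm)
      rcases lt_trichotomy r1 r2 with h | h | h
      · exact absurd heq (ne_of_lt (by nlinarith))
      · exact h
      · exact absurd heq (ne_of_gt (by nlinarith))
  · -- unimodality
    by_cases hall : ∀ x : ℝ, 0 < x → 0 ≤ H x
    · refine ⟨0, Or.inl ⟨?_, ?_⟩⟩
      · rw [Set.Ioc_self]; intro x hx; exact absurd hx (Set.notMem_empty x)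
      · have hs : Set.Ioi (0:ℝ) ∩ Set.Ici 0 = Set.Ioi 0 :=
          Set.inter_eq_left.mpr Set.Ioi_subset_Ici_self
        rw [hs]
        refine antitoneOn_of_deriv_nonpos (convex_Ioi 0) (hcont _ subset_rfl) ?_ ?_
        · rw [interior_Ioi]; exact fun r hr => (hdiff r hr).differentiableWithinAt
        · intro r hr
          rw [interior_Ioi] at hr
          rw [hderiv r hr, neg_mul]
          exact neg_nonpos.mpr (mul_nonneg (hMpos r hr).le (hall _ (pow_pos hr 2)))
    · by_cases hall2 : ∀ x : ℝ, 0 < x → H x ≤ 0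
      · refine ⟨0, Or.inr ⟨?_, ?_⟩⟩
        · rw [Set.Ioc_self]; intro x hx; exact absurd hx (Set.notMem_empty x)
        · have hs : Set.Ioi (0:ℝ) ∩ Set.Ici 0 = Set.Ioi 0 :=
            Set.inter_eq_left.mpr Set.Ioi_subset_Ici_self
          rw [hs]
          refine monotoneOn_of_deriv_nonneg (convex_Ioi 0) (hcont _ subset_rfl) ?_ ?_
          · rw [interior_Ioi]; exact fun r hr => (hdiff r hr).differentiableWithinAt
          · intro r hr
            rw [interior_Ioi] at hr
            rw [hderiv r hr, neg_mul]
            exact neg_nonneg.mpr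
              (mul_nonpos_iff.mpr (Or.inl ⟨(hMpos r hr).le, hall2 _ (pow_pos hr 2)⟩))
      · push_neg at hall hall2
        obtain ⟨x₂, hx₂pos, hx₂⟩ := hall
        obtain ⟨x₁, hx₁pos, hx₁⟩ := hall2
        have hA0 : A ≠ 0 := by
          intro hA0
          rw [hHdef] at hx₁ hx₂
          simp only [hA0, zero_mul, zero_div, zero_add] at hx₁ hx₂
          linarith
        rcases hA0.lt_or_gt with hAneg | hApos
        · -- A < 0 : H strictly increasing, f increases then decreases
          have hmonoH := hmono hAneg
          have hx21 : x₂ < x₁ := by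
            rcases lt_trichotomy x₂ x₁ with h | h | h
            · exact h
            · exfalso; rw [h] at hx₂; linarith
            · exfalso
              have := hmonoH (Set.mem_Ioi.mpr hx₁pos) (Set.mem_Ioi.mpr hx₂pos) h
              linarith
          have hsub : Set.Icc x₂ x₁ ⊆ Set.Ioi 0 := fun y hy =>
            lt_of_lt_of_le hx₂pos hy.1
          obtain ⟨x₀, hx₀mem, hx₀⟩ :=
            intermediate_value_Icc hx21.le (hHcont.mono hsub)
              (Set.mem_Icc.mpr ⟨hx₂.le, hx₁.le⟩)
          have hx₀pos : 0 < x₀ := lt_of_lt_of_le hx₂pos hx₀mem.1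
          have hr₀pos : 0 < Real.sqrt x₀ := Real.sqrt_pos.mpr hx₀pos
          have hr₀sq : Real.sqrt x₀ ^ 2 = x₀ := Real.sq_sqrt hx₀pos.le
          refine ⟨Real.sqrt x₀, Or.inl ⟨?_, ?_⟩⟩
          · refine monotoneOn_of_deriv_nonneg (convex_Ioc 0 _)
              (hcont _ Set.Ioc_subset_Ioi_self) ?_ ?_
            · rw [interior_Ioc]
              exact fun r hr => (hdiff r hr.1).differentiableWithinAt
            · intro r hr
              rw [interior_Ioc] at hr
              have hrsq : r ^ 2 < x₀ := by
                rw [← hr₀sq]; nlinarith [hr.1, hr.2]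
              have hH : H (r ^ 2) < 0 := by
                have := hmonoH (Set.mem_Ioi.mpr (pow_pos hr.1 2))
                  (Set.mem_Ioi.mpr hx₀pos) hrsq
                rw [hx₀] at this; exact this
              rw [hderiv r hr.1, neg_mul]
              exact neg_nonneg.mpr
                (mul_nonpos_iff.mpr (Or.inl ⟨(hMpos r hr.1).le, hH.le⟩))
          · have hs : Set.Ioi (0:ℝ) ∩ Set.Ici (Real.sqrt x₀) = Set.Ici (Real.sqrt x₀) :=
              Set.inter_eq_right.mpr (fun y hy => lt_of_lt_of_le hr₀pos hy)
            rw [hs]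
            refine antitoneOn_of_deriv_nonpos (convex_Ici _)
              (hcont _ (fun y hy => lt_of_lt_of_le hr₀pos hy)) ?_ ?_
            · rw [interior_Ici]
              exact fun r hr => (hdiff r (hr₀pos.trans hr)).differentiableWithinAt
            · intro r hr
              rw [interior_Ici] at hr
              have hrpos : 0 < r := hr₀pos.trans hr
              have hrsq : x₀ < r ^ 2 := by
                rw [← hr₀sq]; nlinarith [Set.mem_Ioi.mp hr, hr₀pos]
              have hH : 0 < H (r ^ 2) := by
                have := hmonoH (Set.mem_Ioi.mpr hx₀pos)
                  (Set.mem_Ioi.mpr (pow_pos hrpos 2)) hrsq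
                rw [hx₀] at this; exact this
              rw [hderiv r hrpos, neg_mul]
              exact neg_nonpos.mpr (mul_nonneg (hMpos r hrpos).le hH.le)
        · -- A > 0 : H strictly decreasing, f decreases then increases
          have hantiH := hanti hApos
          have hx12 : x₁ < x₂ := by
            rcases lt_trichotomy x₁ x₂ with h | h | h
            · exact h
            · exfalso; rw [h] at hx₁; linarith
            · exfalso
              have := hantiH (Set.mem_Ioi.mpr hx₂pos) (Set.mem_Ioi.mpr hx₁pos) h
              linarith
          have hsub : Set.Icc x₁ x₂ ⊆ Set.Ioi 0 := fun y hy =>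
            lt_of_lt_of_le hx₁pos hy.1
          obtain ⟨x₀, hx₀mem, hx₀⟩ :=
            intermediate_value_Icc' hx12.le (hHcont.mono hsub)
              (Set.mem_Icc.mpr ⟨hx₂.le, hx₁.le⟩)
          have hx₀pos : 0 < x₀ := lt_of_lt_of_le hx₁pos hx₀mem.1
          have hr₀pos : 0 < Real.sqrt x₀ := Real.sqrt_pos.mpr hx₀pos
          have hr₀sq : Real.sqrt x₀ ^ 2 = x₀ := Real.sq_sqrt hx₀pos.le
          refine ⟨Real.sqrt x₀, Or.inr ⟨?_, ?_⟩⟩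
          · refine antitoneOn_of_deriv_nonpos (convex_Ioc 0 _)
              (hcont _ Set.Ioc_subset_Ioi_self) ?_ ?_
            · rw [interior_Ioc]
              exact fun r hr => (hdiff r hr.1).differentiableWithinAt
            · intro r hr
              rw [interior_Ioc] at hr
              have hrsq : r ^ 2 < x₀ := by
                rw [← hr₀sq]; nlinarith [hr.1, hr.2]
              have hH : 0 < H (r ^ 2) := by
                have := hantiH (Set.mem_Ioi.mpr (pow_pos hr.1 2))
                  (Set.mem_Ioi.mpr hx₀pos) hrsq
                rw [hx₀] at this; exact this
              rw [hderiv r hr.1, neg_mul]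
              exact neg_nonpos.mpr (mul_nonneg (hMpos r hr.1).le hH.le)
          · have hs : Set.Ioi (0:ℝ) ∩ Set.Ici (Real.sqrt x₀) = Set.Ici (Real.sqrt x₀) :=
              Set.inter_eq_right.mpr (fun y hy => lt_of_lt_of_le hr₀pos hy)
            rw [hs]
            refine monotoneOn_of_deriv_nonneg (convex_Ici _)
              (hcont _ (fun y hy => lt_of_lt_of_le hr₀pos hy)) ?_ ?_
            · rw [interior_Ici]
              exact fun r hr => (hdiff r (hr₀pos.trans hr)).differentiableWithinAt
            · intro r hr
              rw [interior_Ici] at hr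
              have hrpos : 0 < r := hr₀pos.trans hr
              have hrsq : x₀ < r ^ 2 := by
                rw [← hr₀sq]; nlinarith [Set.mem_Ioi.mp hr, hr₀pos]
              have hH : H (r ^ 2) < 0 := by
                have := hantiH (Set.mem_Ioi.mpr hx₀pos)
                  (Set.mem_Ioi.mpr (pow_pos hrpos 2)) hrsq
                rw [hx₀] at this; exact this
              rw [hderiv r hrpos, neg_mul]
              exact neg_nonneg.mpr
                (mul_nonpos_iff.mpr (Or.inl ⟨(hMpos r hrpos).le, hH.le⟩))



/-- For radial generalized-Gaussian densities `g(r) = C₁r^{-2k}exp(-r²/(2σ'²))`,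
`h(r) = C₂r^{-2k}exp(-r²/(2β'²))` with `σ' ≠ β'` and `(λ₁,λ₂) ≠ (0,0)`, the
combination `λ₁g + λ₂h` has at most one critical point on `(0,∞)`, and is
consequently unimodal there. -/
theorem combination_unimodal (k : ℕ) (C₁ C₂ σ' β' lam1 lam2 : ℝ)
    (hC₁ : 0 < C₁) (hC₂ : 0 < C₂) (hσ : 0 < σ') (hβ : 0 < β') (hne : σ' ≠ β')
    (hlam : ¬(lam1 = 0 ∧ lam2 = 0)) :
    Set.Subsingleton {r : ℝ | 0 < r ∧
      deriv (fun r : ℝ =>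
        lam1 * (C₁ * r ^ (-(2 : ℝ) * k) * Real.exp (-r ^ 2 / (2 * σ' ^ 2))) +
        lam2 * (C₂ * r ^ (-(2 : ℝ) * k) * Real.exp (-r ^ 2 / (2 * β' ^ 2)))) r = 0} ∧
    ∃ r₀ : ℝ,
      (MonotoneOn (fun r : ℝ =>
          lam1 * (C₁ * r ^ (-(2 : ℝ) * k) * Real.exp (-r ^ 2 / (2 * σ' ^ 2))) +
          lam2 * (C₂ * r ^ (-(2 : ℝ) * k) * Real.exp (-r ^ 2 / (2 * β' ^ 2))))
          (Set.Ioc 0 r₀) ∧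
        AntitoneOn (fun r : ℝ =>
          lam1 * (C₁ * r ^ (-(2 : ℝ) * k) * Real.exp (-r ^ 2 / (2 * σ' ^ 2))) +
          lam2 * (C₂ * r ^ (-(2 : ℝ) * k) * Real.exp (-r ^ 2 / (2 * β' ^ 2))))
          (Set.Ioi 0 ∩ Set.Ici r₀)) ∨
      (AntitoneOn (fun r : ℝ =>
          lam1 * (C₁ * r ^ (-(2 : ℝ) * k) * Real.exp (-r ^ 2 / (2 * σ' ^ 2))) +
          lam2 * (C₂ * r ^ (-(2 : ℝ) * k) * Real.exp (-r ^ 2 / (2 * β' ^ 2))))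
          (Set.Ioc 0 r₀) ∧
        MonotoneOn (fun r : ℝ =>
          lam1 * (C₁ * r ^ (-(2 : ℝ) * k) * Real.exp (-r ^ 2 / (2 * σ' ^ 2))) +
          lam2 * (C₂ * r ^ (-(2 : ℝ) * k) * Real.exp (-r ^ 2 / (2 * β' ^ 2))))
          (Set.Ioi 0 ∩ Set.Ici r₀)) := by
  rcases lt_or_gt_of_ne hne with h | h
  · have he : (fun r : ℝ =>
        lam1 * (C₁ * r ^ (-(2 : ℝ) * k) * Real.exp (-r ^ 2 / (2 * σ' ^ 2))) +
        lam2 * (C₂ * r ^ (-(2 : ℝ) * k) * Real.exp (-r ^ 2 / (2 * β' ^ 2)))) =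
        (fun r : ℝ =>
        (lam1 * C₁) * r ^ (-(2 : ℝ) * k) * Real.exp (-r ^ 2 / (2 * σ' ^ 2)) +
        (lam2 * C₂) * r ^ (-(2 : ℝ) * k) * Real.exp (-r ^ 2 / (2 * β' ^ 2))) := by
      funext r; ring
    rw [he]
    refine combination_unimodal_aux k (lam1 * C₁) (lam2 * C₂) σ' β' hσ h ?_
    rintro ⟨h1, h2⟩
    exact hlam ⟨(mul_eq_zero.mp h1).resolve_right hC₁.ne',
      (mul_eq_zero.mp h2).resolve_right hC₂.ne'⟩
  · have he : (fun r : ℝ =>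
        lam1 * (C₁ * r ^ (-(2 : ℝ) * k) * Real.exp (-r ^ 2 / (2 * σ' ^ 2))) +
        lam2 * (C₂ * r ^ (-(2 : ℝ) * k) * Real.exp (-r ^ 2 / (2 * β' ^ 2)))) =
        (fun r : ℝ =>
        (lam2 * C₂) * r ^ (-(2 : ℝ) * k) * Real.exp (-r ^ 2 / (2 * β' ^ 2)) +
        (lam1 * C₁) * r ^ (-(2 : ℝ) * k) * Real.exp (-r ^ 2 / (2 * σ' ^ 2))) := by
      funext r; ring
    rw [he]
    refine combination_unimodal_aux k (lam2 * C₂) (lam1 * C₁) β' σ' hβ h ?_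
    rintro ⟨h2, h1⟩
    exact hlam ⟨(mul_eq_zero.mp h1).resolve_right hC₁.ne',
      (mul_eq_zero.mp h2).resolve_right hC₂.ne'⟩
end

section
/- Let σ' = βσ for some β>1 and k ∈ ℕ with k>0. The inverse of the radial density g(r) = C·r^{-2k}·exp(-r²/(2σ'²)) (C>0 a constant) satisfies the closed form g^{-1}(y)² = 2σ'²k·W((1/(2kσ'²))·(C/y)^{1/k}), where W is the principal branch of the Lambert W function. -/
open Real

/-- `w ↦ w * exp w` is injective on nonnegatives. -/
lemma wexp_inj {a b : ℝ} (ha : 0 ≤ a) (hb : 0 ≤ b)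
    (h : a * Real.exp a = b * Real.exp b) : a = b := by
  rcases lt_trichotomy a b with hlt | heq | hgt
  · exfalso
    have : a * Real.exp a < b * Real.exp b :=
      calc a * Real.exp a ≤ a * Real.exp b := by
            exact mul_le_mul_of_nonneg_left (by exact (Real.exp_le_exp.2 hlt.le)) ha
        _ < b * Real.exp b := by
            exact mul_lt_mul_of_pos_right hlt (Real.exp_pos b)
    linarith
  · exact heq
  · exfalso
    have : b * Real.exp b < a * Real.exp a :=
      calc b * Real.exp b ≤ b * Real.exp a := by
            exact mul_le_mul_of_nonneg_left (by exact (Real.exp_le_exp.2 hgt.le)) hb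
        _ < a * Real.exp a := by
            exact mul_lt_mul_of_pos_right hgt (Real.exp_pos a)
    linarith [this, h.symm]

/-- The inverse of the generalized-Gaussian radial density
`g(r) = C·r^{-2k}·exp(-r²/(2σ'²))` has the closed form
`g⁻¹(y)² = 2σ'²k·W((1/(2kσ'²))·(C/y)^{1/k})`, where `W` is the principal branch of
the Lambert W function (the inverse of `w ↦ w·e^w` on `[0,∞)`). -/
theorem genGauss_radial_inverse (k : ℕ) (hk : 0 < k) (C σ β : ℝ)
    (hC : 0 < C) (hσstd : 0 < σ) (hβ : 1 < β) (σ' : ℝ) (hσ' : σ' = β * σ)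
    (W : ℝ → ℝ) (hW : ∀ x : ℝ, 0 ≤ x → 0 ≤ W x ∧ W x * Real.exp (W x) = x)
    (g : ℝ → ℝ)
    (hg : ∀ r : ℝ, 0 < r →
      g r = C * r ^ (-(2 : ℝ) * k) * Real.exp (-r ^ 2 / (2 * σ' ^ 2)))
    (ginv : ℝ → ℝ) (hginv : ∀ r : ℝ, 0 < r → ginv (g r) = r) :
    ∀ y : ℝ, (∃ r : ℝ, 0 < r ∧ g r = y) →
      (ginv y) ^ 2 =
        2 * σ' ^ 2 * k * W ((1 / (2 * k * σ' ^ 2)) * (C / y) ^ ((1 : ℝ) / k)) := by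
  intro y ⟨r, hr, hgr⟩
  have hσ'pos : 0 < σ' := by
    rw [hσ']; positivity
  have hkR : (0:ℝ) < (k:ℝ) := by exact_mod_cast hk
  have hginvy : ginv y = r := by rw [← hgr]; exact hginv r hr
  -- compute C / y
  have hy : y = C * r ^ (-(2 : ℝ) * k) * Real.exp (-r ^ 2 / (2 * σ' ^ 2)) := by
    rw [← hgr]; exact hg r hr
  have hrpow : (0:ℝ) < r ^ (-(2 : ℝ) * k) := Real.rpow_pos_of_pos hr _
  have hypos : 0 < y := by rw [hy]; positivity
  have hCy : C / y = r ^ ((2 : ℝ) * k) * Real.exp (r ^ 2 / (2 * σ' ^ 2)) := by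
    rw [hy]
    rw [show (-(2:ℝ) * k) = -((2:ℝ)*k) by ring, Real.rpow_neg hr.le,
      show (-r^2 / (2 * σ' ^ 2)) = -(r^2/(2*σ'^2)) by ring, Real.exp_neg]
    rw [div_eq_iff (by positivity)]
    field_simp
  -- the argument of W
  set u : ℝ := r ^ 2 / (2 * k * σ' ^ 2) with hu
  have hupos : 0 < u := by positivity
  have harg : (1 / (2 * k * σ' ^ 2)) * (C / y) ^ ((1 : ℝ) / k) = u * Real.exp u := by
    rw [hCy, Real.mul_rpow (by positivity) (Real.exp_pos _).le,
      ← Real.rpow_mul hr.le,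
      Real.rpow_def_of_pos (Real.exp_pos _), Real.log_exp]
    have h1 : (2:ℝ) * k * ((1:ℝ)/k) = 2 := by field_simp
    have h2 : r ^ ((2:ℝ)) = r ^ (2:ℕ) := by
      rw [← Real.rpow_natCast r 2]; norm_num
    rw [h1, h2]
    rw [hu]
    have h3 : r ^ 2 / (2 * σ' ^ 2) * (1 / ↑k) = r ^ 2 / (2 * ↑k * σ' ^ 2) := by
      field_simp
    rw [h3]; ring
  rw [harg, hginvy]
  have hargnn : (0:ℝ) ≤ u * Real.exp u := by positivity
  obtain ⟨hWnn, hWeq⟩ := hW _ hargnn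
  have : W (u * Real.exp u) = u := wexp_inj hWnn hupos.le hWeq
  rw [this, hu]
  field_simp
end
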